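/- For every n ≥ 1, the block densities satisfy the recurrence d_{n+1} = (2·d_n + δ_n·(1 − 2·d_n)) / (3 − 2·d_n), where d_n = c_n/L_n and δ_n = o_n/m_n are real numbers. -/

import Mathlib

/-- Generation operator: expand a run-length vector `R` starting with symbol `s`,
alternating between `s` and `4 - s` from run to run. -/
def G : List ℕ → ℕ → List ℕ
  | [], _ => []
  | r :: rs, s => List.replicate r s ++ G rs (4 - s)

/-- Pillar sequences: `P 1 = [3]`, `P (n+1) = G (P n) 3` for `n ≥ 1`. -/
def P : ℕ → List ℕ
  | 0 => []
  | 1 => [3]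
  | n + 2 => G (P (n + 1)) 3

/-- Block sequences: `B 1 = G [1,3,3,3,1] 1`, `B (n+1) = B n ++ P n ++ B n` for `n ≥ 1`. -/
def B : ℕ → List ℕ
  | 0 => []
  | 1 => G [1, 3, 3, 3, 1] 1
  | n + 2 => B (n + 1) ++ P (n + 1) ++ B (n + 1)

/-!
Every block `B (n+1) = B n ++ P n ++ B n` gives `c (n+1) = 2 c n + o n` and `L (n+1) = 2 L n + m n`,
so the recurrence is pure algebra once we know the invariant `L n = 2 c n + m n`.
That invariant holds for `n = 1` and propagates because `P (n+1) = G (P n) 3` has length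
`sum (P n)`, and a word over `{1, 3}` has sum `3 · length − 2 · count 1`.
-/

theorem G_length (R : List ℕ) (s : ℕ) : (G R s).length = R.sum := by
  induction R generalizing s with
  | nil => rfl
  | cons r rs ih => simp [G, ih]

theorem eq_or_eq_of_mem_G {R : List ℕ} {s : ℕ} (hs : s ≤ 4) :
    ∀ x ∈ G R s, x = s ∨ x = 4 - s := by
  induction R generalizing s with
  | nil => simp [G]
  | cons r rs ih =>
    intro x hx
    simp only [G, List.mem_append, List.mem_replicate] at hx
    rcases hx with ⟨-, rfl⟩ | hx
    · exact Or.inl rfl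
    · rcases ih (Nat.sub_le 4 s) x hx with h | h <;> omega

theorem sum_add_two_mul_count_one {l : List ℕ} (h : ∀ x ∈ l, x = 1 ∨ x = 3) :
    l.sum + 2 * l.count 1 = 3 * l.length := by
  induction l with
  | nil => rfl
  | cons a t ih =>
    have ht := ih fun x hx => h x (List.mem_cons_of_mem a hx)
    rcases h a List.mem_cons_self with rfl | rfl <;> simp <;> omega

theorem P_succ {n : ℕ} (hn : 1 ≤ n) : P (n + 1) = G (P n) 3 := by
  obtain ⟨k, rfl⟩ := Nat.exists_eq_add_of_le' hn
  rfl

theorem B_succ {n : ℕ} (hn : 1 ≤ n) : B (n + 1) = B n ++ P n ++ B n := by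
  obtain ⟨k, rfl⟩ := Nat.exists_eq_add_of_le' hn
  rfl

theorem mem_P {n : ℕ} (hn : 1 ≤ n) : ∀ x ∈ P n, x = 1 ∨ x = 3 := by
  rcases n with _ | _ | n
  · omega
  · simp [P]
  · exact fun x hx => (eq_or_eq_of_mem_G (R := P (n + 1)) (s := 3) (by norm_num) x hx).symm

theorem P_length_pos {n : ℕ} (hn : 1 ≤ n) : 0 < (P n).length := by
  induction n, hn using Nat.le_induction with
  | base => simp [P]
  | succ n hn ih =>
    have hsum := sum_add_two_mul_count_one (mem_P hn)
    have hcount : (P n).count 1 ≤ (P n).length := List.count_le_length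
    rw [P_succ hn, G_length]
    omega

theorem B_length_eq {n : ℕ} (hn : 1 ≤ n) :
    (B n).length = 2 * (B n).count 1 + (P n).length := by
  induction n, hn using Nat.le_induction with
  | base => decide
  | succ n hn ih =>
    have hsum := sum_add_two_mul_count_one (mem_P hn)
    rw [B_succ hn, P_succ hn, G_length]
    simp only [List.length_append, List.count_append]
    omega

theorem two_mul_add_div_eq_of_eq_two_mul_add {K : Type*} [Field K] {c L o m : K}
    (hL : L ≠ 0) (hm : m ≠ 0) (hLm : 2 * L + m ≠ 0) (h : L = 2 * c + m) :
    (2 * c + o) / (2 * L + m) = (2 * (c / L) + o / m * (1 - 2 * (c / L))) / (3 - 2 * (c / L)) := by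
  have h3 : 3 - 2 * (c / L) = (2 * L + m) / L := by
    field_simp
    linear_combination h
  have h1 : 1 - 2 * (c / L) = m / L := by
    field_simp
    linear_combination h
  rw [h3, h1]
  field_simp

/-- For every `n ≥ 1`, the block densities `d n = c n / L n` and pillar densities
`δ n = o n / m n` satisfy `d (n+1) = (2 d n + δ n (1 − 2 d n)) / (3 − 2 d n)`. -/
theorem density_recurrence :
    ∀ n : ℕ, 1 ≤ n →
      ((B (n + 1)).count 1 : ℝ) / ((B (n + 1)).length : ℝ) =
        (2 * (((B n).count 1 : ℝ) / ((B n).length : ℝ)) +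
          (((P n).count 1 : ℝ) / ((P n).length : ℝ)) *
            (1 - 2 * (((B n).count 1 : ℝ) / ((B n).length : ℝ)))) /
        (3 - 2 * (((B n).count 1 : ℝ) / ((B n).length : ℝ))) := by
  intro n hn
  have hm := P_length_pos hn
  have hL := B_length_eq hn
  have hL_pos : 0 < (B n).length := by omega
  have hcount : (B (n + 1)).count 1 = 2 * (B n).count 1 + (P n).count 1 := by
    simp only [B_succ hn, List.count_append]
    ring
  have hlength : (B (n + 1)).length = 2 * (B n).length + (P n).length := by
    simp only [B_succ hn, List.length_append]
    ring
  rw [hcount, hlength]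
  push_cast
  exact two_mul_add_div_eq_of_eq_two_mul_add (by positivity) (by positivity) (by positivity)
    (by exact_mod_cast hL)
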